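/- Let λ be a partition of n = p + q in which every even part occurs with even multiplicity, and assume λ has distinct column lengths; let 0 = k_0 < k_1 < ⋯ < k_m be the column lengths of λ listed increasingly and set d = (p − q + #(odd parts of λ))/2. Then the number of connected components of Γ_BDI(λ;p,q) equals #syd_BDI(λ;p,q) (the graph has no edges) and equals the coefficient of t^d in ∏_{1 ≤ s ≤ m, λ_{k_s} odd} (1 + t + ⋯ + t^{k_s − k_{s−1}}), the coefficient being taken to be 0 if d is not a nonnegative integer. -/

import Mathlib

/-!
Distinct column lengths force consecutive distinct parts to differ by one, so every move of
`Γ_BDI` between two consecutive lengths touches an even length, where `m_T⁺(i) = m(i)/2` is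
frozen; a move at the smallest part is blocked the same way or, if that part is odd, changes
`p - q`. Hence `Γ_BDI` has no edges.

For every filling `p + q = n` and `p - q = 2 ∑_{i odd} m_T⁺(i) - #(odd parts)`, so a BDI diagram
amounts to a choice of `0 ≤ m_T⁺(i) ≤ m(i)` on the odd parts with sum `d`. These choices are
counted by the coefficient of `t^d` in `∏_{i odd} (1 + t + ⋯ + t^{m(i)})`, and the part
`λ_{k_s}` has multiplicity `k_s - k_{s-1}`.
-/

open Finset

/-- A partition of `n`, given by the function `l` listing its parts in weakly
decreasing order: `l j = λ_j` is the `j`-th part for `1 ≤ j ≤ len`, and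
`l j = 0` for `j > len`. -/
structure PartitionData : Type where
  l : ℕ → ℕ
  len : ℕ
  anti : ∀ j, 1 ≤ j → l (j + 1) ≤ l j
  pos : ∀ j, 1 ≤ j → (0 < l j ↔ j ≤ len)

namespace PartitionData

/-- The multiplicity `m(i)` of `i` as a part of the partition. -/
def mult (P : PartitionData) (i : ℕ) : ℕ :=
  ((Finset.Icc 1 P.len).filter (fun j => P.l j = i)).card

/-- The finite set of (distinct) parts of the partition. -/
def partsSet (P : PartitionData) : Finset ℕ :=
  (Finset.Icc 1 P.len).image P.l

/-- The sum of the parts (i.e. the number `n` the partition partitions). -/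
def boxSum (P : PartitionData) : ℕ := ∑ j ∈ Finset.Icc 1 P.len, P.l j

/-- The number of odd parts of the partition. -/
def oddCount (P : PartitionData) : ℕ :=
  ((Finset.Icc 1 P.len).filter (fun j => Odd (P.l j))).card

end PartitionData

/-- A signed Young diagram of shape `P` and signature `(p, q)`, encoded by the
function `f` sending each part length `i` to `m_T⁺(i)`, the number of rows of
length `i` whose leading sign is `+`.  A row of length `i` with leading sign
`+` has `(i+1)/2` plus-boxes and `i/2` minus-boxes, and vice versa. -/
structure SYD (P : PartitionData) (p q : ℕ) : Type where
  f : ℕ → ℕ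
  le_mult : ∀ i, f i ≤ P.mult i
  plus_eq : ∑ i ∈ P.partsSet, (f i * ((i + 1) / 2) + (P.mult i - f i) * (i / 2)) = p
  minus_eq : ∑ i ∈ P.partsSet, (f i * (i / 2) + (P.mult i - f i) * ((i + 1) / 2)) = q

/-- `i` and `j` are consecutive distinct parts: `i > j` with no part strictly
in between (so if the distinct parts are `i_1 > ⋯ > i_k`, the pairs are
`(i_r, i_{r+1})`). -/
def Consec (P : PartitionData) (i j : ℕ) : Prop :=
  i ∈ P.partsSet ∧ j ∈ P.partsSet ∧ j < i ∧ ∀ x ∈ P.partsSet, ¬ (j < x ∧ x < i)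

/-- `j` is the smallest part `i_k`. -/
def IsMinPart (P : PartitionData) (j : ℕ) : Prop :=
  j ∈ P.partsSet ∧ ∀ x ∈ P.partsSet, j ≤ x

/-- Adjacency of signed Young diagrams with step `c`:
`π(T) - π(T') ∈ {±c(e_r - e_{r+1})} ∪ {±c e_k}` in the coordinates indexed by
the distinct parts `i_1 > ⋯ > i_k`. -/
def AdjRel (P : PartitionData) {p q : ℕ} (c : ℕ) (T T' : SYD P p q) : Prop :=
  (∃ i j, Consec P i j ∧ (∀ x, x ≠ i → x ≠ j → T.f x = T'.f x) ∧
    ((T.f i = T'.f i + c ∧ T'.f j = T.f j + c) ∨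
      (T'.f i = T.f i + c ∧ T.f j = T'.f j + c)))
  ∨ (∃ j, IsMinPart P j ∧ (∀ x, x ≠ j → T.f x = T'.f x) ∧
      (T.f j = T'.f j + c ∨ T'.f j = T.f j + c))

/-- The orbit graph `Γ(λ;p,q)` (type AIII). -/
def orbitGraph (P : PartitionData) (p q : ℕ) : SimpleGraph (SYD P p q) :=
  SimpleGraph.fromRel (AdjRel P 1)

/-- Type BDI: `m_T⁺(i) = m(i)/2` for every even part length `i`. -/
def SYD.IsBDI {P : PartitionData} {p q : ℕ} (T : SYD P p q) : Prop :=
  ∀ i, Even i → 2 * T.f i = P.mult i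

/-- Type CI: `p = q` and `m_T⁺(i) = m(i)/2` for every odd part length `i`. -/
def SYD.IsCI {P : PartitionData} {p q : ℕ} (T : SYD P p q) : Prop :=
  p = q ∧ ∀ i, Odd i → 2 * T.f i = P.mult i

/-- Type CII: `p`, `q` even, `m_T⁺(i) = m(i)/2` for every even part length `i`,
and `m(i)`, `m_T⁺(i)` even for every odd part length `i`. -/
def SYD.IsCII {P : PartitionData} {p q : ℕ} (T : SYD P p q) : Prop :=
  Even p ∧ Even q ∧ (∀ i, Even i → 2 * T.f i = P.mult i) ∧
    ∀ i, Odd i → Even (P.mult i) ∧ Even (T.f i)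

/-- Type DIII: `p = q`, `m_T⁺(i) = m(i)/2` for every odd part length `i`, and
`m(i)`, `m_T⁺(i)` even for every even part length `i`. -/
def SYD.IsDIII {P : PartitionData} {p q : ℕ} (T : SYD P p q) : Prop :=
  p = q ∧ (∀ i, Odd i → 2 * T.f i = P.mult i) ∧
    ∀ i, Even i → Even (P.mult i) ∧ Even (T.f i)

/-- The orbit graph `Γ_X(λ;p,q)` on the vertices `syd_X(λ;p,q)` (given by the
predicate `Pr`), with step `c` (`c = 1` for X = BDI, CI and `c = 2` for
X = CII, DIII). -/
def orbitGraphX (P : PartitionData) (p q c : ℕ) (Pr : SYD P p q → Prop) :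
    SimpleGraph {T : SYD P p q // Pr T} :=
  SimpleGraph.fromRel (fun T T' => AdjRel P c T.1 T'.1)

/-- The set of column lengths of `λ`: those `h ≥ 1` with `λ_h - λ_{h+1} > 0`. -/
def colSet (P : PartitionData) : Finset ℕ :=
  (Finset.Icc 1 P.len).filter (fun h => P.l (h + 1) < P.l h)


namespace PartitionData

variable (P : PartitionData)

lemma l_antitoneOn : AntitoneOn P.l (Set.Ici 1) :=
  antitoneOn_nat_Ici_of_succ_le P.anti

lemma mult_eq_zero_of_notMem {i : ℕ} (h : i ∉ P.partsSet) : P.mult i = 0 := by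
  rw [mult, card_eq_zero, filter_eq_empty_iff]
  exact fun j hj hji => h (mem_image.2 ⟨j, hj, hji⟩)

lemma sum_comp_l (g : ℕ → ℕ) :
    ∑ j ∈ Icc 1 P.len, g (P.l j) = ∑ i ∈ P.partsSet, P.mult i * g i := by
  simp only [Finset.sum_comp, partsSet, mult, smul_eq_mul]

lemma boxSum_eq_sum_mult_mul : P.boxSum = ∑ i ∈ P.partsSet, P.mult i * i :=
  P.sum_comp_l id

lemma oddCount_eq_sum_mult : P.oddCount = ∑ i ∈ P.partsSet with Odd i, P.mult i := by
  rw [oddCount, card_filter, P.sum_comp_l (fun i => if Odd i then 1 else 0), sum_filter]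
  simp only [mul_ite, mul_one, mul_zero]

def plusCount (f : ℕ → ℕ) : ℕ :=
  ∑ i ∈ P.partsSet, (f i * ((i + 1) / 2) + (P.mult i - f i) * (i / 2))

def minusCount (f : ℕ → ℕ) : ℕ :=
  ∑ i ∈ P.partsSet, (f i * (i / 2) + (P.mult i - f i) * ((i + 1) / 2))

def extendOdd (x : {i ∈ P.partsSet | Odd i} → ℕ) (i : ℕ) : ℕ :=
  if h : i ∈ {i ∈ P.partsSet | Odd i} then x ⟨i, h⟩ else P.mult i / 2

lemma sum_extendOdd (x : {i ∈ P.partsSet | Odd i} → ℕ) :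
    ∑ i ∈ P.partsSet with Odd i, P.extendOdd x i = ∑ i, x i := by
  rw [← sum_coe_sort]
  exact sum_congr rfl fun i _ => dif_pos i.2

lemma extendOdd_le_mult {x : {i ∈ P.partsSet | Odd i} → ℕ} (hx : ∀ i, x i ≤ P.mult i)
    (i : ℕ) :
    P.extendOdd x i ≤ P.mult i := by
  unfold extendOdd
  split_ifs
  · exact hx _
  · exact Nat.div_le_self _ _

variable {P}

lemma plusCount_add_minusCount {f : ℕ → ℕ} (hf : ∀ i, f i ≤ P.mult i) :
    P.plusCount f + P.minusCount f = P.boxSum := by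
  rw [plusCount, minusCount, ← sum_add_distrib, boxSum_eq_sum_mult_mul]
  refine sum_congr rfl fun i _ => ?_
  have hi : (i + 1) / 2 + i / 2 = i := by omega
  have hfi := hf i
  calc _ = (f i + (P.mult i - f i)) * ((i + 1) / 2 + i / 2) := by ring
    _ = P.mult i * i := by rw [hi, Nat.add_sub_cancel' hfi]

lemma plusCount_sub_minusCount {f : ℕ → ℕ} (hf : ∀ i, f i ≤ P.mult i) :
    (P.plusCount f : ℤ) - P.minusCount f =
      2 * ∑ i ∈ P.partsSet with Odd i, (f i : ℤ) - P.oddCount := by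
  simp only [plusCount, minusCount, oddCount_eq_sum_mult, Nat.cast_sum, mul_sum,
    ← sum_sub_distrib, sum_filter]
  refine sum_congr rfl fun i _ => ?_
  have hhalf : (i + 1) / 2 = i / 2 + if Odd i then 1 else 0 := by
    split_ifs with hi
    · obtain ⟨t, rfl⟩ := hi; omega
    · obtain ⟨t, rfl⟩ := Nat.not_odd_iff_even.1 hi; omega
  rw [hhalf]
  push_cast [Nat.cast_sub (hf i)]
  split_ifs <;> ring

end PartitionData

namespace SYD

open PartitionData

variable {P : PartitionData} {p q : ℕ}

lemma ext {T T' : SYD P p q} (h : T.f = T'.f) : T = T' := by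
  cases T; cases T'; subst h; rfl

lemma sub_add_oddCount (T : SYD P p q) :
    (p : ℤ) - q + P.oddCount = 2 * ∑ i ∈ P.partsSet with Odd i, (T.f i : ℤ) := by
  have h := plusCount_sub_minusCount T.le_mult
  rw [plusCount, minusCount, T.plus_eq, T.minus_eq] at h
  omega

def ofOddSum (hn : P.boxSum = p + q) (f : ℕ → ℕ) (hf : ∀ i, f i ≤ P.mult i)
    (hd : (p : ℤ) - q + P.oddCount = 2 * ∑ i ∈ P.partsSet with Odd i, (f i : ℤ)) :
    SYD P p q where
  f := f
  le_mult := hf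
  plus_eq := show P.plusCount f = p by
    have := plusCount_add_minusCount hf
    have := plusCount_sub_minusCount hf
    omega
  minus_eq := show P.minusCount f = q by
    have := plusCount_add_minusCount hf
    have := plusCount_sub_minusCount hf
    omega

def isBDIEquiv (hn : P.boxSum = p + q) (hmult : ∀ i, Even i → Even (P.mult i)) {d : ℕ}
    (hd : (p : ℤ) - q + P.oddCount = 2 * d) :
    {T : SYD P p q // T.IsBDI} ≃
      {x // x ∈ {x ∈ Fintype.piFinset fun i : {i ∈ P.partsSet | Odd i} =>
        range (P.mult i + 1) | ∑ i, x i = d}} where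
  toFun T := ⟨fun i => T.1.f i, by
    have hT := T.1.sub_add_oddCount
    rw [← sum_coe_sort] at hT
    simp only [mem_filter, Fintype.mem_piFinset, mem_range, Nat.lt_succ_iff, T.1.le_mult,
      implies_true, true_and]
    exact_mod_cast (by omega : (∑ i : {i ∈ P.partsSet | Odd i}, (T.1.f i : ℤ)) = d)⟩
  invFun x :=
    have hx := mem_filter.1 x.2
    have hle : ∀ i, x.1 i ≤ P.mult i := fun i =>
      Nat.lt_succ_iff.1 (mem_range.1 (Fintype.mem_piFinset.1 hx.1 i))
    ⟨ofOddSum hn (P.extendOdd x.1) (P.extendOdd_le_mult hle) (by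
        rw [hd]; exact_mod_cast congrArg (2 * ·) (P.sum_extendOdd x.1 ▸ hx.2).symm),
      fun i hi => by
        have hi' : i ∉ {i ∈ P.partsSet | Odd i} := fun h =>
          Nat.not_odd_iff_even.2 hi (mem_filter.1 h).2
        simp only [ofOddSum, extendOdd, dif_neg hi']
        exact Nat.two_mul_div_two_of_even (hmult i hi)⟩
  left_inv T := by
    refine Subtype.ext (ext (funext fun i => ?_))
    simp only [ofOddSum, extendOdd]
    split_ifs with h
    · rfl
    rcases Nat.even_or_odd i with he | ho
    · have := T.2 i he
      omega
    · have hnot : i ∉ P.partsSet := fun hp => h (mem_filter.2 ⟨hp, ho⟩)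
      have := T.1.le_mult i
      rw [mult_eq_zero_of_notMem P hnot] at this ⊢
      omega
  right_inv x := Subtype.ext (funext fun i => dif_pos i.2)

end SYD

open Polynomial in
lemma Polynomial.coeff_prod_sum_range_X_pow {R ι : Type*} [CommSemiring R] [Fintype ι]
    [DecidableEq ι] (c : ι → ℕ) (d : ℕ) :
    (∏ i, ∑ j ∈ range (c i + 1), (X : R[X]) ^ j).coeff d =
      #{x ∈ Fintype.piFinset fun i => range (c i + 1) | ∑ i, x i = d} := by
  simp only [prod_univ_sum, finsetSum_coeff, prod_pow_eq_pow_sum, coeff_X_pow, sum_boole,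
    eq_comm (a := d)]

lemma SimpleGraph.card_connectedComponent_bot (V : Type*) :
    Nat.card (⊥ : SimpleGraph V).ConnectedComponent = Nat.card V :=
  Nat.card_congr (Equiv.ofBijective _
    ⟨fun _ _ h => reachable_bot.1 (ConnectedComponent.exact h),
      fun c => c.ind fun v => ⟨v, rfl⟩⟩).symm

lemma exists_mem_Icc_eq_of_drop_le_one {f : ℕ → ℕ} {a b v : ℕ}
    (hf : ∀ j ∈ Ico a b, f j ≤ f (j + 1) + 1) (hab : a ≤ b) (hb : f b ≤ v)
    (ha : v ≤ f a) :
    ∃ c ∈ Icc a b, f c = v := by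
  induction b, hab using Nat.le_induction with
  | base => exact ⟨a, left_mem_Icc.2 le_rfl, by omega⟩
  | succ b hab ih =>
    by_cases hv : f b ≤ v
    · obtain ⟨c, hc, hcv⟩ := ih (fun j hj => hf j (Ico_subset_Ico_right b.le_succ hj)) hv
      exact ⟨c, Icc_subset_Icc_right b.le_succ hc, hcv⟩
    · have := hf b (mem_Ico.2 ⟨hab, b.lt_succ_self⟩)
      exact ⟨b + 1, right_mem_Icc.2 (hab.trans b.le_succ), by omega⟩

namespace PartitionData

variable {P : PartitionData}

lemma consec_eq_succ (hdist : ∀ j, 1 ≤ j → P.l j - P.l (j + 1) ≤ 1) {i j : ℕ}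
    (h : Consec P i j) : i = j + 1 := by
  obtain ⟨hi, hj, hji, hgap⟩ := h
  obtain ⟨a, ha, rfl⟩ := mem_image.1 hi
  obtain ⟨b, hb, rfl⟩ := mem_image.1 hj
  rw [mem_Icc] at ha hb
  have hab : a ≤ b := le_of_not_gt fun hba => (P.l_antitoneOn hb.1 ha.1 hba.le).not_gt hji
  obtain ⟨c, hc, hcv⟩ := exists_mem_Icc_eq_of_drop_le_one (f := P.l) (v := P.l a - 1)
    (fun c hc => by have := hdist c (by simp only [mem_Ico] at hc; omega); omega)
    hab (by omega) (by omega)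
  have hmem : P.l a - 1 ∈ P.partsSet := by
    rw [mem_Icc] at hc
    exact mem_image.2 ⟨c, mem_Icc.2 ⟨by omega, by omega⟩, hcv⟩
  have := hgap _ hmem
  omega

lemma not_adjRel_of_isBDI (hdist : ∀ j, 1 ≤ j → P.l j - P.l (j + 1) ≤ 1) {p q : ℕ}
    {T T' : SYD P p q} (hT : T.IsBDI) (hT' : T'.IsBDI) : ¬ AdjRel P 1 T T' := by
  have heven : ∀ i, Even i → T.f i = T'.f i := fun i hi => by
    have := hT i hi
    have := hT' i hi
    omega
  rintro (⟨i, j, hc, -, hij⟩ | ⟨j, hj, hrest, hjj⟩)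
  · obtain rfl := consec_eq_succ hdist hc
    rcases Nat.even_or_odd j with he | ho
    · have := heven j he
      omega
    · have := heven (j + 1) ho.add_one
      omega
  · rcases Nat.even_or_odd j with he | ho
    · have := heven j he
      omega
    · -- the signature fixes the sum of `m_T⁺` over the odd parts
      have hsum := T.sub_add_oddCount.symm.trans T'.sub_add_oddCount
      have hjO : j ∈ {i ∈ P.partsSet | Odd i} := mem_filter.2 ⟨hj.1, ho⟩
      have hrest' : ∑ i ∈ {i ∈ P.partsSet | Odd i}.erase j, (T.f i : ℤ) =
          ∑ i ∈ {i ∈ P.partsSet | Odd i}.erase j, (T'.f i : ℤ) :=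
        sum_congr rfl fun x hx => by rw [hrest x (ne_of_mem_erase hx)]
      rw [← add_sum_erase _ _ hjO, ← add_sum_erase _ _ hjO, hrest'] at hsum
      omega

lemma orbitGraphX_isBDI_eq_bot (hdist : ∀ j, 1 ≤ j → P.l j - P.l (j + 1) ≤ 1) {p q : ℕ} :
    orbitGraphX P p q 1 SYD.IsBDI = ⊥ := by
  ext T T'
  simp only [orbitGraphX, SimpleGraph.fromRel_adj, SimpleGraph.bot_adj, iff_false, not_and,
    not_or]
  exact fun _ => ⟨not_adjRel_of_isBDI hdist T.2 T'.2, not_adjRel_of_isBDI hdist T'.2 T.2⟩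

lemma l_eq_iff_forall_notMem_colSet {a b : ℕ} (ha : 1 ≤ a) (hab : a ≤ b) :
    P.l b = P.l a ↔ ∀ h ∈ colSet P, ¬ (a ≤ h ∧ h < b) := by
  constructor
  · rintro hba h hh ⟨hah, hhb⟩
    have hdrop := (mem_filter.1 hh).2
    have := P.l_antitoneOn ha (show 1 ≤ h by omega) hah
    have := P.l_antitoneOn (show 1 ≤ h + 1 by omega) (show 1 ≤ b by omega) hhb
    omega
  · intro hno
    induction b, hab using Nat.le_induction with
    | base => rfl
    | succ b hab ih =>
      have hb : ¬ P.l (b + 1) < P.l b := fun hlt =>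
        hno b (mem_filter.2 ⟨mem_Icc.2 ⟨by omega, (P.pos b (by omega)).1 (by omega)⟩, hlt⟩)
          ⟨hab, b.lt_succ_self⟩
      have := P.anti b (by omega)
      rw [← ih fun h hh hlt => hno h hh ⟨hlt.1, by omega⟩]
      omega

structure IsColumnLengthEnum (P : PartitionData) (m : ℕ) (k : ℕ → ℕ) : Prop where
  zero : k 0 = 0
  strictMonoOn : StrictMonoOn k (Set.Icc 0 m)
  image_eq : (Icc 1 m).image k = colSet P

namespace IsColumnLengthEnum

variable {m : ℕ} {k : ℕ → ℕ} (hk : IsColumnLengthEnum P m k)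
include hk

lemma mem_colSet {s : ℕ} (hs : s ∈ Icc 1 m) : k s ∈ colSet P :=
  hk.image_eq ▸ mem_image_of_mem k hs

lemma le_iff_le {s t : ℕ} (hs : s ≤ m) (ht : t ≤ m) : k s ≤ k t ↔ s ≤ t :=
  hk.strictMonoOn.le_iff_le ⟨s.zero_le, hs⟩ ⟨t.zero_le, ht⟩

lemma l_eq_iff {s : ℕ} (hs : s ∈ Icc 1 m) {j : ℕ} (hj : 1 ≤ j) :
    P.l j = P.l (k s) ↔ j ∈ Ioc (k (s - 1)) (k s) := by
  have hks := hk.mem_colSet hs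
  have hks1 : 1 ≤ k s := (mem_Icc.1 (mem_filter.1 hks).1).1
  rw [mem_Icc] at hs
  rcases le_or_gt j (k s) with hjs | hsj
  · rw [eq_comm, l_eq_iff_forall_notMem_colSet hj hjs, ← hk.image_eq, forall_mem_image,
      mem_Ioc]
    constructor
    · intro hno
      refine ⟨?_, hjs⟩
      rcases Nat.eq_zero_or_pos (s - 1) with h0 | hpos
      · rw [h0, hk.zero]
        omega
      · have hlt : ¬ k s ≤ k (s - 1) := by rw [hk.le_iff_le hs.2 (by omega)]; omega
        have := hno (mem_Icc.2 ⟨hpos, by omega⟩)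
        omega
    · rintro ⟨hsj, -⟩ t ht ⟨hjt, hts⟩
      have hts' : ¬ k s ≤ k t := by omega
      rw [hk.le_iff_le hs.2 (mem_Icc.1 ht).2] at hts'
      have := (hk.le_iff_le (mem_Icc.1 ht).2 (show s - 1 ≤ m by omega)).2 (by omega)
      omega
  · have hne := (l_eq_iff_forall_notMem_colSet (P := P) hks1 hsj.le).not.2
      fun hno => hno _ hks ⟨le_rfl, hsj⟩
    rw [mem_Ioc]
    omega

lemma mult_l_eq {s : ℕ} (hs : s ∈ Icc 1 m) : P.mult (P.l (k s)) = k s - k (s - 1) := by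
  have hklen : k s ≤ P.len := (mem_Icc.1 (mem_filter.1 (hk.mem_colSet hs)).1).2
  have hrows : {j ∈ Icc 1 P.len | P.l j = P.l (k s)} = Ioc (k (s - 1)) (k s) := by
    ext j
    rw [mem_filter, mem_Icc]
    constructor
    · rintro ⟨⟨hj, -⟩, hjs⟩
      exact (hk.l_eq_iff hs hj).1 hjs
    · intro hj
      have := mem_Ioc.1 hj
      exact ⟨⟨by omega, by omega⟩, (hk.l_eq_iff hs (by omega)).2 hj⟩
  rw [mult, hrows, Nat.card_Ioc]

lemma injOn_l : Set.InjOn (fun s => P.l (k s)) (Icc 1 m) := by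
  intro s hs t ht hst
  have hks : 1 ≤ k s := (mem_Icc.1 (mem_filter.1 (hk.mem_colSet hs)).1).1
  have hkt : 1 ≤ k t := (mem_Icc.1 (mem_filter.1 (hk.mem_colSet ht)).1).1
  have h1 := mem_Ioc.1 ((hk.l_eq_iff ht hks).1 hst)
  have h2 := mem_Ioc.1 ((hk.l_eq_iff hs hkt).1 hst.symm)
  exact hk.strictMonoOn.injOn ⟨s.zero_le, (mem_Icc.1 hs).2⟩ ⟨t.zero_le, (mem_Icc.1 ht).2⟩
    (by omega)

lemma image_l_eq : (Icc 1 m).image (fun s => P.l (k s)) = P.partsSet := by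
  ext i
  constructor
  · intro hi
    obtain ⟨s, hs, rfl⟩ := mem_image.1 hi
    exact mem_image_of_mem _ (mem_filter.1 (hk.mem_colSet hs)).1
  · intro hi
    obtain ⟨j, hj, rfl⟩ := mem_image.1 hi
    rw [mem_Icc] at hj
    have hlen : P.len ∈ colSet P := mem_filter.2 ⟨mem_Icc.2 ⟨by omega, le_rfl⟩, by
      have := (P.pos (P.len + 1) (by omega)).not.2 (by omega)
      have := (P.pos P.len (by omega)).2 le_rfl
      omega⟩
    rw [← hk.image_eq] at hlen
    obtain ⟨t, ht, hkt⟩ := mem_image.1 hlen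
    -- the first column length `k s` that is at least `j`
    have hex : ∃ s, 1 ≤ s ∧ j ≤ k s := ⟨t, (mem_Icc.1 ht).1, hkt ▸ hj.2⟩
    have hs := Nat.find_spec hex
    have hst : Nat.find hex ≤ t := Nat.find_min' hex ⟨(mem_Icc.1 ht).1, hkt ▸ hj.2⟩
    have hmem : Nat.find hex ∈ Icc 1 m := mem_Icc.2 ⟨hs.1, hst.trans (mem_Icc.1 ht).2⟩
    refine mem_image.2 ⟨Nat.find hex, hmem, ((hk.l_eq_iff hmem hj.1).2 ?_).symm⟩
    refine mem_Ioc.2 ⟨?_, hs.2⟩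
    rcases Nat.eq_zero_or_pos (Nat.find hex - 1) with h0 | hpos
    · rw [h0, hk.zero]
      omega
    · have := Nat.find_min hex (show Nat.find hex - 1 < Nat.find hex by omega)
      omega

lemma prod_filter_odd_eq {M : Type*} [CommMonoid M] (g : ℕ → M) :
    ∏ s ∈ Icc 1 m with Odd (P.l (k s)), g (k s - k (s - 1)) =
      ∏ i ∈ P.partsSet with Odd i, g (P.mult i) := by
  rw [← hk.image_l_eq, filter_image, prod_image (hk.injOn_l.mono (filter_subset _ _))]
  exact prod_congr rfl fun s hs => by rw [hk.mult_l_eq (mem_filter.1 hs).1]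

end IsColumnLengthEnum

end PartitionData

/-- Type BDI: for `λ` with every even part of even multiplicity and with
distinct column lengths `0 = k_0 < k_1 < ⋯ < k_m`, the graph `Γ_BDI(λ;p,q)`
has no edges, so its number of connected components equals `#syd_BDI(λ;p,q)`,
which is the coefficient of `t^d` in
`∏_{s : λ_{k_s} odd} (1 + t + ⋯ + t^{k_s - k_{s-1}})`
where `d = (p - q + #(odd parts of λ))/2`, the coefficient being `0` if `d` is
not a nonnegative integer. -/
theorem stmt15 (P : PartitionData) (p q m : ℕ) (k : ℕ → ℕ)
    (hn : P.boxSum = p + q)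
    (hmult : ∀ i, Even i → Even (P.mult i))
    (hdist : ∀ j, 1 ≤ j → P.l j - P.l (j + 1) ≤ 1)
    (hk0 : k 0 = 0) (hkmono : StrictMonoOn k (Set.Icc 0 m))
    (hkim : (Finset.Icc 1 m).image k = colSet P) :
    orbitGraphX P p q 1 SYD.IsBDI = ⊥ ∧
    Nat.card (orbitGraphX P p q 1 SYD.IsBDI).ConnectedComponent =
      Nat.card {T : SYD P p q // T.IsBDI} ∧
    (Nat.card {T : SYD P p q // T.IsBDI} : ℤ) =
      (if 0 ≤ (p : ℤ) - (q : ℤ) + (P.oddCount : ℤ) ∧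
          (2 : ℤ) ∣ ((p : ℤ) - (q : ℤ) + (P.oddCount : ℤ)) then
        Polynomial.coeff
          (∏ s ∈ (Finset.Icc 1 m).filter (fun s => Odd (P.l (k s))),
            ∑ j ∈ Finset.range (k s - k (s - 1) + 1), (Polynomial.X : Polynomial ℤ) ^ j)
          ((((p : ℤ) - (q : ℤ) + (P.oddCount : ℤ)) / 2).toNat)
      else 0) := by
  have hk : P.IsColumnLengthEnum m k := ⟨hk0, hkmono, hkim⟩
  have hbot := PartitionData.orbitGraphX_isBDI_eq_bot hdist (p := p) (q := q)
  refine ⟨hbot, by rw [hbot]; exact SimpleGraph.card_connectedComponent_bot _, ?_⟩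
  split_ifs with hcond
  · obtain ⟨hnonneg, d, hd⟩ := hcond
    lift d to ℕ using by omega
    rw [hd, Int.mul_ediv_cancel_left _ two_ne_zero, Int.toNat_natCast,
      hk.prod_filter_odd_eq fun c => ∑ j ∈ range (c + 1), (Polynomial.X : Polynomial ℤ) ^ j,
      ← prod_coe_sort, Polynomial.coeff_prod_sum_range_X_pow,
      Nat.card_congr (SYD.isBDIEquiv hn hmult hd), Nat.card_eq_finsetCard]
  · rw [Nat.cast_eq_zero, Nat.card_eq_zero]
    refine Or.inl ⟨fun T => hcond ?_⟩
    rw [T.1.sub_add_oddCount]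
    exact ⟨by positivity, dvd_mul_right _ _⟩
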